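/- Let N be a positive natural number, and for each agent i ∈ {1,…,N} let U_i be a nonempty finite action set and Q_i : U_i → ℝ an individual action-value function, with ū_i a maximizer of Q_i over U_i and ū = (ū_1,…,ū_N). Let Q, Q' : (Π i, U_i) → ℝ satisfy: (a) Q'(ū) ≥ Q'(u) for every joint action u; (b) Q'(ū) = Q(ū); and (c) Q(ū) ≥ Q'(u) ≥ Q(u) for every joint action u. Then the maxima of Q and Q' over all joint actions coincide and are both attained at ū: max_u Q(u) = max_u Q'(u) = Q(ū) = Q'(ū). -/

import Mathlib

theorem Finset.sup'_eq_apply_of_forall_le {α ι : Type*} [SemilatticeSup α] {s : Finset ι}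
    (hs : s.Nonempty) {f : ι → α} {i : ι} (hi : i ∈ s) (h : ∀ j ∈ s, f j ≤ f i) :
    s.sup' hs f = f i :=
  le_antisymm (s.sup'_le hs f h) (s.le_sup' f hi)

theorem maxima_coincide_general
    (N : ℕ)
    (U : Fin N → Type*) [∀ i, Fintype (U i)] [∀ i, Nonempty (U i)]
    (ubar : ∀ i, U i)
    (Q Q' : (∀ i, U i) → ℝ)
    (heq : Q' ubar = Q ubar)
    (hsand : ∀ u : ∀ i, U i, Q u ≤ Q' u ∧ Q' u ≤ Q ubar) :
    (Finset.univ : Finset (∀ i, U i)).sup' Finset.univ_nonempty Q =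
      (Finset.univ : Finset (∀ i, U i)).sup' Finset.univ_nonempty Q' ∧
    (Finset.univ : Finset (∀ i, U i)).sup' Finset.univ_nonempty Q' = Q ubar ∧
    Q ubar = Q' ubar := by
  have hQ : Finset.univ.sup' Finset.univ_nonempty Q = Q ubar :=
    Finset.sup'_eq_apply_of_forall_le _ (Finset.mem_univ ubar)
      fun u _ => (hsand u).1.trans (hsand u).2
  have hQ' : Finset.univ.sup' Finset.univ_nonempty Q' = Q' ubar :=
    Finset.sup'_eq_apply_of_forall_le _ (Finset.mem_univ ubar)
      fun u _ => heq ▸ (hsand u).2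
  exact ⟨by rw [hQ, hQ', heq], hQ'.trans heq, heq.symm⟩

theorem maxima_coincide
    (N : ℕ) (hN : 0 < N)
    (U : Fin N → Type*) [∀ i, Fintype (U i)] [∀ i, Nonempty (U i)]
    (Qi : ∀ i, U i → ℝ)
    (ubar : ∀ i, U i)
    (hubar : ∀ i, ∀ u : U i, Qi i u ≤ Qi i (ubar i))
    (Q Q' : (∀ i, U i) → ℝ)
    (hmono : ∀ u : ∀ i, U i, Q' u ≤ Q' ubar)
    (heq : Q' ubar = Q ubar)
    (hsand : ∀ u : ∀ i, U i, Q u ≤ Q' u ∧ Q' u ≤ Q ubar) :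
    (Finset.univ : Finset (∀ i, U i)).sup' Finset.univ_nonempty Q =
      (Finset.univ : Finset (∀ i, U i)).sup' Finset.univ_nonempty Q' ∧
    (Finset.univ : Finset (∀ i, U i)).sup' Finset.univ_nonempty Q' = Q ubar ∧
    Q ubar = Q' ubar :=
  maxima_coincide_general N U ubar Q Q' heq hsand
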